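/- Let L > 0, ν ≥ 0, k > 0, and r ∈ ℝ³ with ‖r‖₂ = 1. Let m : [0,∞) × [0,L] → ℝ³ be twice continuously differentiable in (t,x), satisfy the controlled Landau–Lifshitz equation ∂m/∂t = m × m_xx − ν m × (m × m_xx) + k(r − m) on [0,∞) × [0,L], and satisfy the Neumann boundary conditions m_x(t,0) = m_x(t,L) = 0 for all t ≥ 0. Then the Lyapunov function V(t) = (1/2)∫₀ᴸ ‖m(t,x) − r‖₂² dx + (1/2)∫₀ᴸ ‖m_x(t,x)‖₂² dx satisfies, for all t ≥ 0, dV/dt ≤ −(k − 2νL²) ∫₀ᴸ ‖m_x‖₂² dx − (ν/2) ∫₀ᴸ ‖m × m_xx‖₂² dx − k ∫₀ᴸ ‖m − r‖₂² dx. (The central Lyapunov estimate in the proofs of the paper's Theorems 3.7 and 3.8; the paper records the constant 8νL⁴ in place of 2νL².) -/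

import Mathlib

/-- Cross product on `ℝ³ = EuclideanSpace ℝ (Fin 3)`. -/
noncomputable def cross3 (u v : EuclideanSpace ℝ (Fin 3)) : EuclideanSpace ℝ (Fin 3) :=
  (WithLp.equiv 2 (Fin 3 → ℝ)).symm
    ![u 1 * v 2 - u 2 * v 1, u 2 * v 0 - u 0 * v 2, u 0 * v 1 - u 1 * v 0]

/-- Second spatial derivative `m_xx` of `m(t, x)`. -/
noncomputable def mxx (m : ℝ → ℝ → EuclideanSpace ℝ (Fin 3)) (t x : ℝ) :
    EuclideanSpace ℝ (Fin 3) :=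
  deriv (deriv (m t)) x

/-!
Differentiating under the integral sign and integrating `⟪m_x, m_xt⟫` by parts (Neumann
conditions) gives `dV/dt = ∫ ⟪m - r - m_xx, m_t⟫`. Inserting the equation, the precession term
contributes `-∫ ⟪r, m × m_xx⟫ = 0` (the integrand is the derivative of `⟪r, m × m_x⟫`), the gain
term gives `-k ∫ ‖m - r‖² - k ∫ ‖m_x‖²`, and the damping term gives
`-ν ∫ ‖m × m_xx‖² + ν ∫ ⟪m × m_xx, r × m⟫`. Since `m × m_x` vanishes at `x = 0` and has derivative
`m × m_xx`, one more integration by parts, the fundamental theorem of calculus, Cauchy–Schwarz and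
AM–GM bound the last integral by `½ ∫ ‖m × m_xx‖² + (L²/2) ∫ ‖m_x‖²`.
-/

local notation "ℝ³" => EuclideanSpace ℝ (Fin 3)

open scoped RealInnerProductSpace
open intervalIntegral Set

lemma cross3_apply (u v : ℝ³) (i : Fin 3) :
    cross3 u v i = ![u 1 * v 2 - u 2 * v 1, u 2 * v 0 - u 0 * v 2, u 0 * v 1 - u 1 * v 0] i :=
  rfl

lemma EuclideanSpace.inner_eq_fin_three (x y : ℝ³) :
    ⟪x, y⟫ = x 0 * y 0 + x 1 * y 1 + x 2 * y 2 := by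
  simp [PiLp.inner_apply, Fin.sum_univ_three]
  ring

lemma EuclideanSpace.norm_sq_eq_fin_three (x : ℝ³) : ‖x‖ ^ 2 = x 0 ^ 2 + x 1 ^ 2 + x 2 ^ 2 := by
  rw [← real_inner_self_eq_norm_sq, EuclideanSpace.inner_eq_fin_three]
  ring

lemma norm_cross3_le (u v : ℝ³) : ‖cross3 u v‖ ≤ ‖u‖ * ‖v‖ := by
  refine le_of_pow_le_pow_left₀ two_ne_zero (by positivity) ?_
  have hu := EuclideanSpace.norm_sq_eq_fin_three u
  have hv := EuclideanSpace.norm_sq_eq_fin_three v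
  rw [mul_pow, hu, hv, EuclideanSpace.norm_sq_eq_fin_three]
  simp only [cross3_apply, Matrix.cons_val_zero, Matrix.cons_val_one, Matrix.cons_val_two,
    Matrix.head_cons, Matrix.tail_cons]
  nlinarith [sq_nonneg (u 0 * v 0 + u 1 * v 1 + u 2 * v 2)]

noncomputable def cross3L : ℝ³ →L[ℝ] ℝ³ →L[ℝ] ℝ³ :=
  (LinearMap.mk₂ ℝ cross3
    (fun _ _ _ => by ext i; fin_cases i <;> simp [cross3_apply] <;> ring)
    (fun _ _ _ => by ext i; fin_cases i <;> simp [cross3_apply] <;> ring)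
    (fun _ _ _ => by ext i; fin_cases i <;> simp [cross3_apply] <;> ring)
    (fun _ _ _ => by ext i; fin_cases i <;> simp [cross3_apply] <;> ring)).mkContinuous₂ 1
    (fun u v => by simpa using norm_cross3_le u v)

@[simp] lemma cross3L_apply (u v : ℝ³) : cross3L u v = cross3 u v := rfl

@[simp] lemma cross3_self (u : ℝ³) : cross3 u u = 0 := by
  ext i; fin_cases i <;> simp [cross3_apply] <;> ring

@[simp] lemma cross3_zero_left (v : ℝ³) : cross3 0 v = 0 := by
  simp [← cross3L_apply]

@[simp] lemma cross3_zero_right (u : ℝ³) : cross3 u 0 = 0 := by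
  simp [← cross3L_apply]

@[fun_prop] lemma Continuous.cross3 {α : Type*} [TopologicalSpace α] {f g : α → ℝ³}
    (hf : Continuous f) (hg : Continuous g) : Continuous fun y => cross3 (f y) (g y) :=
  cross3L.continuous₂.comp₂ hf hg

lemma HasDerivAt.cross3 {f g : ℝ → ℝ³} {f' g' : ℝ³} {x : ℝ}
    (hf : HasDerivAt f f' x) (hg : HasDerivAt g g' x) :
    HasDerivAt (fun y => cross3 (f y) (g y)) (cross3 f' (g x) + cross3 (f x) g') x := by
  simpa [add_comm] using cross3L.hasDerivAt_of_bilinear (fun _ => hf) (fun _ => hg)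

section PartialDerivatives

variable {E : Type*} [NormedAddCommGroup E] [NormedSpace ℝ E]

noncomputable def partialFst (f : ℝ × ℝ → E) (p : ℝ × ℝ) : E := fderiv ℝ f p (1, 0)

noncomputable def partialSnd (f : ℝ × ℝ → E) (p : ℝ × ℝ) : E := fderiv ℝ f p (0, 1)

variable {f : ℝ × ℝ → E}

lemma hasDerivAt_partialFst {t x : ℝ} (hf : DifferentiableAt ℝ f (t, x)) :
    HasDerivAt (fun s => f (s, x)) (partialFst f (t, x)) t :=
  hf.hasFDerivAt.comp_hasDerivAt t ((hasDerivAt_id t).prodMk (hasDerivAt_const t x))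

lemma hasDerivAt_partialSnd {t x : ℝ} (hf : DifferentiableAt ℝ f (t, x)) :
    HasDerivAt (fun y => f (t, y)) (partialSnd f (t, x)) x :=
  hf.hasFDerivAt.comp_hasDerivAt x ((hasDerivAt_const x t).prodMk (hasDerivAt_id x))

lemma ContDiff.partialFst {n : WithTop ℕ∞} (hf : ContDiff ℝ (n + 1) f) :
    ContDiff ℝ n (partialFst f) :=
  (hf.fderiv_right le_rfl).clm_apply contDiff_const

lemma ContDiff.partialSnd {n : WithTop ℕ∞} (hf : ContDiff ℝ (n + 1) f) :
    ContDiff ℝ n (partialSnd f) :=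
  (hf.fderiv_right le_rfl).clm_apply contDiff_const

lemma partialFst_partialSnd (hf : ContDiff ℝ 2 f) (p : ℝ × ℝ) :
    partialFst (partialSnd f) p = partialSnd (partialFst f) p := by
  have hf' : HasFDerivAt (fderiv ℝ f) (fderiv ℝ (fderiv ℝ f) p) p :=
    ((hf.fderiv_right (m := 1) le_rfl).differentiable one_ne_zero p).hasFDerivAt
  have happly (v : ℝ × ℝ) : fderiv ℝ (fun q => fderiv ℝ f q v) p
      = (ContinuousLinearMap.apply ℝ E v).comp (fderiv ℝ (fderiv ℝ f) p) :=
    ((ContinuousLinearMap.apply ℝ E v).hasFDerivAt.comp p hf').fderiv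
  change fderiv ℝ (fun q => fderiv ℝ f q (0, 1)) p (1, 0)
    = fderiv ℝ (fun q => fderiv ℝ f q (1, 0)) p (0, 1)
  rw [happly, happly]
  exact (hf.contDiffAt.isSymmSndFDerivAt (by simp)).eq _ _

end PartialDerivatives

section IntervalIntegral

variable {E F : Type*} [NormedAddCommGroup E] [NormedSpace ℝ E] [CompleteSpace E]
  [NormedAddCommGroup F] [InnerProductSpace ℝ F] {a b : ℝ}

lemma sq_intervalIntegral_le_mul_integral_sq (hab : a ≤ b) {f : ℝ → ℝ} (hf : Continuous f) :
    (∫ x in a..b, f x) ^ 2 ≤ (b - a) * ∫ x in a..b, f x ^ 2 := by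
  have hquad (c : ℝ) :
      0 ≤ (b - a) * (c * c) + (-2 * ∫ x in a..b, f x) * c + ∫ x in a..b, f x ^ 2 := by
    have hexp : ∫ x in a..b, (c - f x) ^ 2
        = ∫ x in a..b, (c ^ 2 - 2 * c * f x + f x ^ 2) := by
      congr 1; ext x; ring
    have hnonneg : 0 ≤ ∫ x in a..b, (c - f x) ^ 2 := integral_nonneg hab fun _ _ => sq_nonneg _
    rw [hexp, integral_add, integral_sub, integral_const, integral_const_mul] at hnonneg
    · simp only [smul_eq_mul] at hnonneg
      linarith
    all_goals apply Continuous.intervalIntegrable; fun_prop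
  have := discrim_le_zero hquad
  rw [discrim] at this
  nlinarith

lemma norm_le_integral_norm_deriv_of_eq_zero {g g' : ℝ → E} {x : ℝ}
    (hg : ∀ y, HasDerivAt g (g' y) y) (hg' : Continuous g') (ha : g a = 0) (hx : x ∈ Icc a b) :
    ‖g x‖ ≤ ∫ y in a..b, ‖g' y‖ := by
  rw [← sub_zero (g x), ← ha,
    ← integral_eq_sub_of_hasDerivAt (fun y _ => hg y) (hg'.intervalIntegrable a x)]
  calc ‖∫ y in a..x, g' y‖ ≤ ∫ y in a..x, ‖g' y‖ := norm_integral_le_integral_norm hx.1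
    _ ≤ ∫ y in a..b, ‖g' y‖ :=
      integral_mono_interval le_rfl hx.1 hx.2 (Filter.Eventually.of_forall fun _ => norm_nonneg _)
        (hg'.norm.intervalIntegrable _ _)

lemma integral_norm_mul_norm_le_of_eq_zero {G : Type*} [NormedAddCommGroup G]
    {g g' : ℝ → E} {h : ℝ → G} (hab : a ≤ b)
    (hg : ∀ x, HasDerivAt g (g' x) x) (hg' : Continuous g') (hh : Continuous h) (ha : g a = 0) :
    ∫ x in a..b, ‖g x‖ * ‖h x‖
      ≤ (∫ x in a..b, ‖g' x‖ ^ 2) / 2 + (b - a) ^ 2 * (∫ x in a..b, ‖h x‖ ^ 2) / 2 := by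
  have hgc : Continuous g := continuous_iff_continuousAt.2 fun x => (hg x).continuousAt
  set A := ∫ x in a..b, ‖g' x‖
  set B := ∫ x in a..b, ‖h x‖
  have hAB : ∫ x in a..b, ‖g x‖ * ‖h x‖ ≤ A * B := by
    rw [← integral_const_mul]
    refine integral_mono_on hab ((hgc.norm.mul hh.norm).intervalIntegrable _ _)
      ((continuous_const.mul hh.norm).intervalIntegrable _ _) fun x hx => ?_
    exact mul_le_mul_of_nonneg_right (norm_le_integral_norm_deriv_of_eq_zero hg hg' ha hx)
      (norm_nonneg _)
  have hA : A ^ 2 ≤ (b - a) * ∫ x in a..b, ‖g' x‖ ^ 2 :=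
    sq_intervalIntegral_le_mul_integral_sq hab hg'.norm
  have hB : B ^ 2 ≤ (b - a) * ∫ x in a..b, ‖h x‖ ^ 2 :=
    sq_intervalIntegral_le_mul_integral_sq hab hh.norm
  have hA0 : 0 ≤ A := integral_nonneg hab fun _ _ => norm_nonneg _
  have hB0 : 0 ≤ B := integral_nonneg hab fun _ _ => norm_nonneg _
  have hX : 0 ≤ ∫ x in a..b, ‖g' x‖ ^ 2 := integral_nonneg hab fun _ _ => by positivity
  have hY : 0 ≤ ∫ x in a..b, ‖h x‖ ^ 2 := integral_nonneg hab fun _ _ => by positivity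
  -- AM–GM, with `X = ∫ ‖g'‖²`, `Y = ∫ ‖h‖²`: `(A B)² ≤ (b - a)² X Y ≤ ((X + (b - a)² Y) / 2)²`
  have hsq : (A * B) ^ 2
      ≤ ((∫ x in a..b, ‖g' x‖ ^ 2) / 2 + (b - a) ^ 2 * (∫ x in a..b, ‖h x‖ ^ 2) / 2) ^ 2 := by
    nlinarith [mul_le_mul hA hB (sq_nonneg B) (by positivity),
      sq_nonneg ((∫ x in a..b, ‖g' x‖ ^ 2) - (b - a) ^ 2 * ∫ x in a..b, ‖h x‖ ^ 2)]
  exact hAB.trans ((pow_le_pow_iff_left₀ (by positivity) (by positivity) two_ne_zero).1 hsq)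

lemma integral_inner_deriv_eq_deriv_inner {f f' g g' : ℝ → F}
    (hf : ∀ x, HasDerivAt f (f' x) x) (hg : ∀ x, HasDerivAt g (g' x) x)
    (hf' : Continuous f') (hg' : Continuous g') :
    ∫ x in a..b, ⟪f x, g' x⟫ = ⟪f b, g b⟫ - ⟪f a, g a⟫ - ∫ x in a..b, ⟪f' x, g x⟫ := by
  have hfc : Continuous f := continuous_iff_continuousAt.2 fun x => (hf x).continuousAt
  have hgc : Continuous g := continuous_iff_continuousAt.2 fun x => (hg x).continuousAt
  rw [← integral_eq_sub_of_hasDerivAt (fun x _ => (hf x).inner ℝ (hg x)), integral_add,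
    add_sub_cancel_right]
  all_goals apply Continuous.intervalIntegrable; fun_prop

lemma hasDerivAt_integral_norm_sq {G G' : ℝ × ℝ → F} (hG : Continuous G) (hG' : Continuous G')
    (hder : ∀ s x, HasDerivAt (fun τ => G (τ, x)) (G' (s, x)) s) (t : ℝ) :
    HasDerivAt (fun s => ∫ x in a..b, ‖G (s, x)‖ ^ 2)
      (∫ x in a..b, 2 * ⟪G (t, x), G' (t, x)⟫) t := by
  obtain ⟨C, hC⟩ := ((isCompact_Icc (a := t - 1) (b := t + 1)).prod isCompact_uIcc
    ).exists_bound_of_continuousOn (f := fun p => 2 * ⟪G p, G' p⟫) (by fun_prop)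
  refine (hasDerivAt_integral_of_dominated_loc_of_deriv_le (F := fun s x => ‖G (s, x)‖ ^ 2)
    (F' := fun s x => 2 * ⟪G (s, x), G' (s, x)⟫) (bound := fun _ => C)
    (Metric.ball_mem_nhds t one_pos) ?_ ?_ ?_ ?_ intervalIntegrable_const ?_).2
  · exact Filter.Eventually.of_forall fun s => by fun_prop
  · apply Continuous.intervalIntegrable; fun_prop
  · exact Continuous.aestronglyMeasurable (by fun_prop)
  · refine Filter.Eventually.of_forall fun x hx s hs => hC (s, x) ⟨?_, uIoc_subset_uIcc hx⟩
    rw [Real.ball_eq_Ioo] at hs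
    exact Ioo_subset_Icc_self hs
  · exact Filter.Eventually.of_forall fun x _ s _ => (hder s x).norm_sq

end IntervalIntegral

section Lyapunov

variable {F : Type*} [NormedAddCommGroup F] [InnerProductSpace ℝ F] {f : ℝ × ℝ → F}

theorem hasDerivAt_lyapunov (hf : ContDiff ℝ 2 f) (r : F) {a b t : ℝ}
    (ha : partialSnd f (t, a) = 0) (hb : partialSnd f (t, b) = 0) :
    HasDerivAt (fun s => (1 / 2) * (∫ x in a..b, ‖f (s, x) - r‖ ^ 2)
        + (1 / 2) * ∫ x in a..b, ‖partialSnd f (s, x)‖ ^ 2)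
      (∫ x in a..b, ⟪f (t, x) - r - partialSnd (partialSnd f) (t, x), partialFst f (t, x)⟫) t := by
  have hdiff : Differentiable ℝ f := hf.differentiable two_ne_zero
  have h₁ : ContDiff ℝ 1 (partialFst f) := hf.partialFst
  have h₂ : ContDiff ℝ 1 (partialSnd f) := hf.partialSnd
  have h₂₁ : Continuous (partialSnd (partialFst f)) := (h₁.partialSnd (n := 0)).continuous
  have h₂₂ : Continuous (partialSnd (partialSnd f)) := (h₂.partialSnd (n := 0)).continuous
  have hpot := hasDerivAt_integral_norm_sq (a := a) (b := b) (G := fun p => f p - r)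
    (by fun_prop) h₁.continuous (fun s x => (hasDerivAt_partialFst (hdiff _)).sub_const r) t
  have hgrad := hasDerivAt_integral_norm_sq (a := a) (b := b) h₂.continuous h₂₁
    (fun s x => partialFst_partialSnd hf (s, x) ▸
      hasDerivAt_partialFst (h₂.differentiable one_ne_zero _)) t
  have hibp : ∫ x in a..b, ⟪partialSnd f (t, x), partialSnd (partialFst f) (t, x)⟫
      = -∫ x in a..b, ⟪partialSnd (partialSnd f) (t, x), partialFst f (t, x)⟫ := by
    rw [integral_inner_deriv_eq_deriv_inner
      (fun x => hasDerivAt_partialSnd (h₂.differentiable one_ne_zero _))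
      (fun x => hasDerivAt_partialSnd (h₁.differentiable one_ne_zero _)) (by fun_prop)
      (by fun_prop), ha, hb]
    simp
  have hsplit :
      ∫ x in a..b, ⟪f (t, x) - r - partialSnd (partialSnd f) (t, x), partialFst f (t, x)⟫
      = (∫ x in a..b, ⟪f (t, x) - r, partialFst f (t, x)⟫)
        - ∫ x in a..b, ⟪partialSnd (partialSnd f) (t, x), partialFst f (t, x)⟫ := by
    rw [← integral_sub (Continuous.intervalIntegrable (by fun_prop) _ _)
      (Continuous.intervalIntegrable (by fun_prop) _ _)]
    exact integral_congr fun x _ => inner_sub_left _ _ _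
  refine ((hpot.const_mul (1 / 2)).add (hgrad.const_mul (1 / 2))).congr_deriv ?_
  rw [hsplit, integral_const_mul, integral_const_mul, hibp]
  ring

end Lyapunov

noncomputable def controlledLLField (ν k : ℝ) (r m c : ℝ³) : ℝ³ :=
  cross3 m c - ν • cross3 m (cross3 m c) + k • (r - m)

lemma inner_sub_sub_controlledLLField (ν k : ℝ) (r m c : ℝ³) :
    ⟪m - r - c, controlledLLField ν k r m c⟫
      = ν * ⟪cross3 m c, cross3 r m⟫ - ν * ‖cross3 m c‖ ^ 2 - k * ‖m - r‖ ^ 2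
        + k * ⟪m - r, c⟫ - ⟪r, cross3 m c⟫ := by
  simp only [controlledLLField, EuclideanSpace.inner_eq_fin_three,
    EuclideanSpace.norm_sq_eq_fin_three, cross3_apply, PiLp.sub_apply, PiLp.add_apply,
    PiLp.smul_apply, smul_eq_mul, Matrix.cons_val_zero, Matrix.cons_val_one, Matrix.head_cons,
    Matrix.cons_val_two, Matrix.tail_cons]
  ring

lemma hasDerivAt_cross3_deriv {u u' : ℝ → ℝ³} {u'' : ℝ³} {x : ℝ} (hu : HasDerivAt u (u' x) x)
    (hu' : HasDerivAt u' u'' x) :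
    HasDerivAt (fun y => cross3 (u y) (u' y)) (cross3 (u x) u'') x := by
  simpa using hu.cross3 hu'

section SpatialEstimate

variable {u u' u'' : ℝ → ℝ³} {L : ℝ}

lemma integral_inner_cross3_le (hL : 0 ≤ L) {r : ℝ³} (hr : ‖r‖ ≤ 1)
    (hu : ∀ x, HasDerivAt u (u' x) x) (hu' : ∀ x, HasDerivAt u' (u'' x) x)
    (hu'' : Continuous u'') (hu'0 : u' 0 = 0) (hu'L : u' L = 0) :
    ∫ x in 0..L, ⟪cross3 (u x) (u'' x), cross3 r (u x)⟫
      ≤ (∫ x in 0..L, ‖cross3 (u x) (u'' x)‖ ^ 2) / 2 + L ^ 2 * (∫ x in 0..L, ‖u' x‖ ^ 2) / 2 := by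
  have huc : Continuous u := continuous_iff_continuousAt.2 fun x => (hu x).continuousAt
  have hu'c : Continuous u' := continuous_iff_continuousAt.2 fun x => (hu' x).continuousAt
  have hg (x : ℝ) := hasDerivAt_cross3_deriv (hu x) (hu' x)
  have hibp : ∫ x in 0..L, ⟪cross3 (u x) (u'' x), cross3 r (u x)⟫
      = ∫ x in 0..L, -⟪cross3 r (u' x), cross3 (u x) (u' x)⟫ := by
    rw [integral_congr fun x _ => real_inner_comm _ _, integral_neg,
      integral_inner_deriv_eq_deriv_inner
        (fun x => by simpa using (hasDerivAt_const x r).cross3 (hu x))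
        hg (by fun_prop) (by fun_prop), hu'0, hu'L]
    simp
  have hpointwise : ∀ x ∈ Icc 0 L, -⟪cross3 r (u' x), cross3 (u x) (u' x)⟫
      ≤ ‖cross3 (u x) (u' x)‖ * ‖u' x‖ := fun x _ => by
    calc -⟪cross3 r (u' x), cross3 (u x) (u' x)⟫
        ≤ ‖cross3 r (u' x)‖ * ‖cross3 (u x) (u' x)‖ :=
          (neg_le_abs _).trans (abs_real_inner_le_norm _ _)
      _ ≤ ‖u' x‖ * ‖cross3 (u x) (u' x)‖ := by
          gcongr
          exact (norm_cross3_le _ _).trans (mul_le_of_le_one_left (norm_nonneg _) hr)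
      _ = _ := mul_comm _ _
  rw [hibp]
  refine (integral_mono_on hL (Continuous.intervalIntegrable (by fun_prop) _ _)
    (Continuous.intervalIntegrable (by fun_prop) _ _) hpointwise).trans ?_
  simpa using integral_norm_mul_norm_le_of_eq_zero hL hg
    (by fun_prop) hu'c (by simp [hu'0])

lemma integral_inner_controlledLLField_le (hL : 0 ≤ L) {ν : ℝ} (hν : 0 ≤ ν) (k : ℝ) {r : ℝ³}
    (hr : ‖r‖ ≤ 1) (hu : ∀ x, HasDerivAt u (u' x) x) (hu' : ∀ x, HasDerivAt u' (u'' x) x)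
    (hu'' : Continuous u'') (hu'0 : u' 0 = 0) (hu'L : u' L = 0) :
    ∫ x in 0..L, ⟪u x - r - u'' x, controlledLLField ν k r (u x) (u'' x)⟫
      ≤ -(k - 2 * ν * L ^ 2) * (∫ x in 0..L, ‖u' x‖ ^ 2)
        - (ν / 2) * (∫ x in 0..L, ‖cross3 (u x) (u'' x)‖ ^ 2)
        - k * ∫ x in 0..L, ‖u x - r‖ ^ 2 := by
  have huc : Continuous u := continuous_iff_continuousAt.2 fun x => (hu x).continuousAt
  have hu'c : Continuous u' := continuous_iff_continuousAt.2 fun x => (hu' x).continuousAt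
  have hgrad : ∫ x in 0..L, ⟪u x - r, u'' x⟫ = -∫ x in 0..L, ‖u' x‖ ^ 2 := by
    rw [integral_inner_deriv_eq_deriv_inner (fun x => (hu x).sub_const r) hu' hu'c hu'',
      hu'0, hu'L]
    simp
  have hnull : ∫ x in 0..L, ⟪r, cross3 (u x) (u'' x)⟫ = 0 := by
    rw [integral_inner_deriv_eq_deriv_inner (fun x => hasDerivAt_const x r)
      (fun x => hasDerivAt_cross3_deriv (hu x) (hu' x)) continuous_const (by fun_prop),
      hu'0, hu'L]
    simp
  have hcross := integral_inner_cross3_le hL hr hu hu' hu'' hu'0 hu'L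
  have hQ : 0 ≤ ∫ x in 0..L, ‖u' x‖ ^ 2 := integral_nonneg hL fun _ _ => by positivity
  rw [integral_congr fun x _ => inner_sub_sub_controlledLLField ν k r (u x) (u'' x),
    integral_sub, integral_add, integral_sub, integral_sub, integral_const_mul,
    integral_const_mul, integral_const_mul, integral_const_mul, hgrad, hnull]
  · nlinarith [mul_le_mul_of_nonneg_left hcross hν, mul_nonneg hν (mul_nonneg (sq_nonneg L) hQ)]
  all_goals apply Continuous.intervalIntegrable; fun_prop

end SpatialEstimate

theorem controlled_landau_lifshitz_lyapunov_estimate_general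
    (L ν k : ℝ) (hL : 0 < L) (hν : 0 ≤ ν)
    (r : EuclideanSpace ℝ (Fin 3)) (hr : ‖r‖ = 1)
    (m : ℝ → ℝ → EuclideanSpace ℝ (Fin 3))
    (hsmooth : ContDiff ℝ 2 (fun p : ℝ × ℝ => m p.1 p.2))
    (hpde : ∀ t x : ℝ, 0 ≤ t → x ∈ Set.Icc (0 : ℝ) L →
      deriv (fun s => m s x) t
        = cross3 (m t x) (mxx m t x)
          - ν • cross3 (m t x) (cross3 (m t x) (mxx m t x))
          + k • (r - m t x))
    (hbc : ∀ t : ℝ, 0 ≤ t → deriv (m t) 0 = 0 ∧ deriv (m t) L = 0) :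
    ∀ t : ℝ, 0 ≤ t →
      ∃ V' : ℝ,
        HasDerivWithinAt
          (fun s => (1 / 2) * (∫ x in (0 : ℝ)..L, ‖m s x - r‖ ^ 2)
            + (1 / 2) * ∫ x in (0 : ℝ)..L, ‖deriv (m s) x‖ ^ 2)
          V' (Set.Ici (0 : ℝ)) t ∧
        V' ≤ -(k - 2 * ν * L ^ 2) * (∫ x in (0 : ℝ)..L, ‖deriv (m t) x‖ ^ 2)
          - (ν / 2) * (∫ x in (0 : ℝ)..L, ‖cross3 (m t x) (mxx m t x)‖ ^ 2)
          - k * ∫ x in (0 : ℝ)..L, ‖m t x - r‖ ^ 2 := by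
  intro t ht
  set f : ℝ × ℝ → ℝ³ := fun p => m p.1 p.2
  have hdiff : Differentiable ℝ f := hsmooth.differentiable two_ne_zero
  have hf₂ : ContDiff ℝ 1 (partialSnd f) := hsmooth.partialSnd
  have hdiff₂ : Differentiable ℝ (partialSnd f) := hf₂.differentiable one_ne_zero
  have hf₂₂ : Continuous (partialSnd (partialSnd f)) := (hf₂.partialSnd (n := 0)).continuous
  have hmx (s x : ℝ) : deriv (m s) x = partialSnd f (s, x) :=
    (hasDerivAt_partialSnd (hdiff _)).deriv
  have hmxx (x : ℝ) : mxx m t x = partialSnd (partialSnd f) (t, x) := by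
    rw [mxx, funext (hmx t)]
    exact (hasDerivAt_partialSnd (hdiff₂ _)).deriv
  have hmt (x : ℝ) : deriv (fun s => m s x) t = partialFst f (t, x) :=
    (hasDerivAt_partialFst (hdiff _)).deriv
  obtain ⟨hbc0, hbcL⟩ := hbc t ht
  rw [hmx] at hbc0 hbcL
  simp_rw [hmx, hmxx]
  refine ⟨_, (hasDerivAt_lyapunov hsmooth r hbc0 hbcL).hasDerivWithinAt, ?_⟩
  rw [integral_congr fun x hx => by
    rw [← hmt, hpde t x ht (uIcc_of_le hL.le ▸ hx), hmxx]]
  exact integral_inner_controlledLLField_le hL.le hν k hr.le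
    (fun x => hasDerivAt_partialSnd (hdiff _)) (fun x => hasDerivAt_partialSnd (hdiff₂ _))
    (by fun_prop) hbc0 hbcL

/-- Along C² solutions of the controlled Landau–Lifshitz equation
`∂m/∂t = m × m_xx − ν m × (m × m_xx) + k(r − m)` with Neumann boundary conditions on
`[0, L]` and `‖r‖ = 1`, the Lyapunov function
`V(t) = (1/2)∫₀ᴸ ‖m − r‖² dx + (1/2)∫₀ᴸ ‖m_x‖² dx` satisfies, for every `t ≥ 0`,
`dV/dt ≤ −(k − 2νL²)∫₀ᴸ ‖m_x‖² dx − (ν/2)∫₀ᴸ ‖m × m_xx‖² dx − k∫₀ᴸ ‖m − r‖² dx`. -/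
theorem controlled_landau_lifshitz_lyapunov_estimate
    (L ν k : ℝ) (hL : 0 < L) (hν : 0 ≤ ν) (hk : 0 < k)
    (r : EuclideanSpace ℝ (Fin 3)) (hr : ‖r‖ = 1)
    (m : ℝ → ℝ → EuclideanSpace ℝ (Fin 3))
    (hsmooth : ContDiff ℝ 2 (fun p : ℝ × ℝ => m p.1 p.2))
    (hpde : ∀ t x : ℝ, 0 ≤ t → x ∈ Set.Icc (0 : ℝ) L →
      deriv (fun s => m s x) t
        = cross3 (m t x) (mxx m t x)
          - ν • cross3 (m t x) (cross3 (m t x) (mxx m t x))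
          + k • (r - m t x))
    (hbc : ∀ t : ℝ, 0 ≤ t → deriv (m t) 0 = 0 ∧ deriv (m t) L = 0) :
    ∀ t : ℝ, 0 ≤ t →
      ∃ V' : ℝ,
        HasDerivWithinAt
          (fun s => (1 / 2) * (∫ x in (0 : ℝ)..L, ‖m s x - r‖ ^ 2)
            + (1 / 2) * ∫ x in (0 : ℝ)..L, ‖deriv (m s) x‖ ^ 2)
          V' (Set.Ici (0 : ℝ)) t ∧
        V' ≤ -(k - 2 * ν * L ^ 2) * (∫ x in (0 : ℝ)..L, ‖deriv (m t) x‖ ^ 2)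
          - (ν / 2) * (∫ x in (0 : ℝ)..L, ‖cross3 (m t x) (mxx m t x)‖ ^ 2)
          - k * ∫ x in (0 : ℝ)..L, ‖m t x - r‖ ^ 2 :=
  controlled_landau_lifshitz_lyapunov_estimate_general L ν k hL hν r hr m hsmooth hpde hbc
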